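/- Let φ: [0,∞) → [0,∞) be continuous, nondecreasing, positive on (0,∞), with φ(0)=0, satisfying ∫₀^ε (∫₀^s φ(r) dr)^{−1/2} ds < ∞ for some ε > 0. Define Q(t) = (1/2)∫₀^t (∫₀^s φ(r) dr)^{−1/2} ds and let R: [0,ρ̄) → [0,∞) be the inverse of Q. Then R is twice differentiable on (0, ρ̄) and satisfies R''(x) = 2 φ(R(x)) for every x ∈ (0, ρ̄). -/

import Mathlib

open Set MeasureTheory Filter
open scoped Topology

/-!
Write `F(s) = ∫₀ˢ φ`. Since `φ > 0` on `(0, ∞)`, `F > 0` there and `Q' = 1 / (2 √F) > 0`, so by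
the inverse function theorem `R` is differentiable at every point `Q t`, `t > 0`, with
`R' = 2 √(F ∘ R)` near it. Differentiating once more with the chain rule and `F' = φ` gives
`R'' = (φ ∘ R) · R' / √(F ∘ R) = 2 φ ∘ R`.
-/

theorem HasStrictDerivAt.eventually_mem_and_apply_leftInverse
    {𝕜 : Type*} [NontriviallyNormedField 𝕜] [CompleteSpace 𝕜] {f g : 𝕜 → 𝕜} {f' a : 𝕜}
    {U : Set 𝕜} (hf : HasStrictDerivAt f f' a) (hf' : f' ≠ 0) (hU : U ∈ 𝓝 a)
    (hg : ∀ x ∈ U, g (f x) = x) : ∀ᶠ y in 𝓝 (f a), g y ∈ U ∧ f (g y) = y := by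
  rw [← hf.map_nhds_eq hf', eventually_map]
  filter_upwards [hU] with x hx
  rw [hg x hx]
  exact ⟨hx, rfl⟩

theorem hasStrictDerivAt_integral_of_continuousOn_Ioi {E : Type*} [NormedAddCommGroup E]
    [NormedSpace ℝ E] [CompleteSpace E] {f : ℝ → E} {a t : ℝ} (hf : ContinuousOn f (Ioi a))
    (hfi : IntervalIntegrable f volume a t) (ht : a < t) :
    HasStrictDerivAt (fun u => ∫ s in a..u, f s) (f t) t :=
  intervalIntegral.integral_hasStrictDerivAt_right hfi
    (hf.stronglyMeasurableAtFilter isOpen_Ioi t ht) (hf.continuousAt (Ioi_mem_nhds ht))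

theorem ContinuousOn.intervalIntegrable_of_integrableOn_Ioc {E : Type*} [NormedAddCommGroup E]
    {f : ℝ → E} {a ε t : ℝ} (hf : ContinuousOn f (Ioi a)) (hε : a < ε)
    (hfε : IntegrableOn f (Ioc a ε)) (ht : a < t) : IntervalIntegrable f volume a t :=
  ((intervalIntegrable_iff_integrableOn_Ioc_of_le hε.le).2 hfε).trans <|
    (hf.mono fun _ hx => (lt_min hε ht).trans_le hx.1).intervalIntegrable

theorem HasDerivAt.two_mul_sqrt_comp {F R : ℝ → ℝ} {x s F' : ℝ} (hF : HasDerivAt F F' s)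
    (hFs : 0 < F s) (hR : HasDerivAt R (2 * √(F s)) x) (hRx : R x = s) :
    HasDerivAt (fun y => 2 * √(F (R y))) (2 * F') x := by
  rw [← hRx] at hF hFs hR
  refine (((hF.comp x hR).sqrt hFs.ne').const_mul 2).congr_deriv ?_
  rw [Function.comp_apply]
  field_simp [(Real.sqrt_pos.2 hFs).ne']

theorem hasStrictDerivAt_half_integral_rpow_neg_half {F : ℝ → ℝ} (hF : ContinuousOn F (Ioi 0))
    (hF_pos : ∀ s > 0, 0 < F s) {ε : ℝ} (hε : 0 < ε)
    (hFε : IntegrableOn (fun s => F s ^ (-(1/2) : ℝ)) (Ioc 0 ε)) {s : ℝ} (hs : 0 < s) :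
    HasStrictDerivAt (fun t => (1/2) * ∫ u in (0:ℝ)..t, F u ^ (-(1/2) : ℝ)) (2 * √(F s))⁻¹ s := by
  have hg : ContinuousOn (fun s => F s ^ (-(1/2) : ℝ)) (Ioi 0) := fun s hs =>
    ((hF s hs).rpow_const (Or.inl (hF_pos s hs).ne')).mono_of_mem_nhdsWithin self_mem_nhdsWithin
  refine ((hasStrictDerivAt_integral_of_continuousOn_Ioi hg
    (hg.intervalIntegrable_of_integrableOn_Ioc hε hFε hs) hs).const_mul (1/2)).congr_deriv ?_
  rw [Real.sqrt_eq_rpow, Real.rpow_neg (hF_pos s hs).le]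
  ring

theorem R_satisfies_ODE_general (φ : ℝ → ℝ)
    (hφ_cont : ContinuousOn φ (Ici 0))
    (hφ_pos : ∀ t : ℝ, 0 < t → 0 < φ t)
    (hint : ∃ ε : ℝ, 0 < ε ∧
      IntegrableOn (fun s => (∫ r in (0:ℝ)..s, φ r) ^ (-(1/2) : ℝ)) (Ioc 0 ε))
    (Q : ℝ → ℝ)
    (hQ : ∀ t : ℝ, Q t = (1/2) * ∫ s in (0:ℝ)..t, (∫ r in (0:ℝ)..s, φ r) ^ (-(1/2) : ℝ))
    (R : ℝ → ℝ) (hR : ∀ t ∈ Ici (0:ℝ), R (Q t) = t) :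
    ∀ x ∈ Q '' (Ioi 0), DifferentiableAt ℝ R x ∧ DifferentiableAt ℝ (deriv R) x ∧
      deriv (deriv R) x = 2 * φ (R x) := by
  obtain ⟨ε, hε, hεint⟩ := hint
  set F : ℝ → ℝ := fun s => ∫ r in (0:ℝ)..s, φ r
  have hφ_int : ∀ s > 0, IntervalIntegrable φ volume 0 s := fun s hs =>
    (hφ_cont.mono Icc_subset_Ici_self).intervalIntegrable_of_Icc hs.le
  have hF' : ∀ s > 0, HasStrictDerivAt F (φ s) s := fun s hs =>
    hasStrictDerivAt_integral_of_continuousOn_Ioi (hφ_cont.mono Ioi_subset_Ici_self)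
      (hφ_int s hs) hs
  have hF_pos : ∀ s > 0, 0 < F s := fun s hs =>
    intervalIntegral.intervalIntegral_pos_of_pos_on (hφ_int s hs) (fun r hr => hφ_pos r hr.1) hs
  have hQ' : ∀ s > 0, HasStrictDerivAt Q (2 * √(F s))⁻¹ s := fun s hs => by
    rw [funext hQ]
    exact hasStrictDerivAt_half_integral_rpow_neg_half
      (fun u hu => (hF' u hu).hasDerivAt.continuousAt.continuousWithinAt) hF_pos hε hεint hs
  have hQ'_ne : ∀ s > 0, (2 * √(F s))⁻¹ ≠ 0 := fun s hs => by have := hF_pos s hs; positivity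
  have hR' : ∀ s > 0, HasDerivAt R (2 * √(F s)) (Q s) := fun s hs => by
    simpa only [inv_inv] using ((hQ' s hs).to_local_left_inverse (hQ'_ne s hs)
      (eventually_of_mem (Ioi_mem_nhds hs) fun u hu => hR u (Ioi_subset_Ici_self hu))).hasDerivAt
  rintro x ⟨t, ht : 0 < t, rfl⟩
  have hR'_eq : deriv R =ᶠ[𝓝 (Q t)] fun y => 2 * √(F (R y)) := by
    filter_upwards [(hQ' t ht).eventually_mem_and_apply_leftInverse (hQ'_ne t ht)
      (Ioi_mem_nhds ht) fun u hu => hR u (Ioi_subset_Ici_self hu)] with y ⟨hy, hQRy⟩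
    rw [← (hR' _ hy).deriv, hQRy]
  have hR'' : HasDerivAt (fun y => 2 * √(F (R y))) (2 * φ t) (Q t) :=
    (hF' t ht).hasDerivAt.two_mul_sqrt_comp (hF_pos t ht) (hR' t ht) (hR t ht.le)
  refine ⟨(hR' t ht).differentiableAt, hR'_eq.differentiableAt_iff.2 hR''.differentiableAt, ?_⟩
  rw [hR'_eq.deriv_eq, hR''.deriv, hR t ht.le]

/-- The inverse function `R` of `Q(t) = (1/2)∫₀ᵗ (∫₀ˢ φ(r) dr)^{-1/2} ds` is twice
differentiable on the image of `(0,∞)` under `Q` (i.e. on `(0, ρ̄)`) and satisfies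
the ODE `R'' = 2 φ(R)` there. -/
theorem R_satisfies_ODE (φ : ℝ → ℝ)
    (hφ_cont : ContinuousOn φ (Ici 0)) (hφ_mono : MonotoneOn φ (Ici 0))
    (hφ0 : φ 0 = 0) (hφ_pos : ∀ t : ℝ, 0 < t → 0 < φ t)
    (hint : ∃ ε : ℝ, 0 < ε ∧
      IntegrableOn (fun s => (∫ r in (0:ℝ)..s, φ r) ^ (-(1/2) : ℝ)) (Ioc 0 ε))
    (Q : ℝ → ℝ)
    (hQ : ∀ t : ℝ, Q t = (1/2) * ∫ s in (0:ℝ)..t, (∫ r in (0:ℝ)..s, φ r) ^ (-(1/2) : ℝ))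
    (R : ℝ → ℝ) (hR : ∀ t ∈ Ici (0:ℝ), R (Q t) = t) :
    ∀ x ∈ Q '' (Ioi 0), DifferentiableAt ℝ R x ∧ DifferentiableAt ℝ (deriv R) x ∧
      deriv (deriv R) x = 2 * φ (R x) :=
  R_satisfies_ODE_general φ hφ_cont hφ_pos hint Q hQ R hR
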